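/- arXiv:1901.05506 — 4 statements merged into one kernel-verified Lean document; each statement's English description precedes it below -/
import Mathlib

section
/- Let conflict : ℝ → ℝ → Prop be shift-invariant (for all s t Δ ≥ 0, conflict s t → conflict (s+Δ) (t+Δ)). Assume for all t ∈ [t_i, t_i^u), conflict t t_j, and for all t ∈ [t_j, t_j^u), conflict t_i t, with t_i^u > t_i and t_j^u > t_j. If Δ_i ∈ (0, t_i^u - t_i], Δ_j ∈ (0, t_j^u - t_j], and ¬ conflict (t_i + Δ_i) (t_j + Δ_j), then both Δ_i < Δ_j and Δ_j < Δ_i hold, a contradiction; hence no such Δ_i, Δ_j exist. -/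
/-!
If `Δj ≤ Δi`, the start `ti + Δi - Δj` still lies in the unsafe interval `[ti, tiu)` (as
`Δj > 0`), so it conflicts with `tj`; shifting both agents by `Δj` gives a conflict at
`(ti + Δi, tj + Δj)`. Hence `Δi < Δj`, and symmetrically `Δj < Δi`.
-/

section ShiftInvariant

variable {α : Type*} [AddCommGroup α] [PartialOrder α]

def ShiftInvariant (r : α → α → Prop) : Prop :=
  ∀ s t Δ : α, 0 ≤ Δ → r s t → r (s + Δ) (t + Δ)

theorem ShiftInvariant.flip {r : α → α → Prop} (hr : ShiftInvariant r) :
    ShiftInvariant (flip r) :=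
  fun s t Δ hΔ h => hr t s Δ hΔ h

theorem ShiftInvariant.add_add_of_le [IsOrderedAddMonoid α] {r : α → α → Prop}
    (hr : ShiftInvariant r) {ti tiu tj Δi Δj : α} (hi : ∀ t, ti ≤ t → t < tiu → r t tj)
    (hΔj : 0 < Δj) (hle : Δj ≤ Δi) (hΔi : Δi ≤ tiu - ti) :
    r (ti + Δi) (tj + Δj) := by
  have hstart : r (ti + (Δi - Δj)) tj :=
    hi _ (le_add_of_nonneg_right (sub_nonneg.2 hle))
      ((add_lt_add_right (sub_lt_self Δi hΔj) ti).trans_le (le_sub_iff_add_le'.1 hΔi))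
  simpa [add_assoc] using hr _ _ Δj hΔj.le hstart

end ShiftInvariant

theorem ccbs_sound_pair_contradiction_general
    (conflict : ℝ → ℝ → Prop) (ti tj tiu tju : ℝ)
    (hshift : ∀ s t Δ : ℝ, 0 ≤ Δ → conflict s t → conflict (s + Δ) (t + Δ))
    (hi : ∀ t : ℝ, ti ≤ t → t < tiu → conflict t tj)
    (hj : ∀ t : ℝ, tj ≤ t → t < tju → conflict ti t)
    (Δi Δj : ℝ) (hΔi : 0 < Δi ∧ Δi ≤ tiu - ti) (hΔj : 0 < Δj ∧ Δj ≤ tju - tj)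
    (hnoc : ¬ conflict (ti + Δi) (tj + Δj)) :
    Δi < Δj ∧ Δj < Δi := by
  have hinv : ShiftInvariant conflict := hshift
  constructor
  · by_contra! hle
    exact hnoc (hinv.add_add_of_le hi hΔj.1 hle hΔi.2)
  · by_contra! hle
    exact hnoc (hinv.flip.add_add_of_le hj hΔi.1 hle hΔj.2)

/-- The contradiction step in the proof of the CCBS sound-pair lemma: a conflict-free
pair of delays within the respective unsafe intervals would force both `Δi < Δj` and
`Δj < Δi`. -/
theorem ccbs_sound_pair_contradiction
    (conflict : ℝ → ℝ → Prop) (ti tj tiu tju : ℝ)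
    (hti : ti < tiu) (htj : tj < tju)
    (hshift : ∀ s t Δ : ℝ, 0 ≤ Δ → conflict s t → conflict (s + Δ) (t + Δ))
    (hi : ∀ t : ℝ, ti ≤ t → t < tiu → conflict t tj)
    (hj : ∀ t : ℝ, tj ≤ t → t < tju → conflict ti t)
    (Δi Δj : ℝ) (hΔi : 0 < Δi ∧ Δi ≤ tiu - ti) (hΔj : 0 < Δj ∧ Δj ≤ tju - tj)
    (hnoc : ¬ conflict (ti + Δi) (tj + Δj)) :
    Δi < Δj ∧ Δj < Δi :=
  ccbs_sound_pair_contradiction_general conflict ti tj tiu tju hshift hi hj Δi Δj hΔi hΔj hnoc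
end

section
/- Let Π be a set (of joint plans) and let C₁, C₂ be predicates on Π. Call (C₁, C₂) a sound pair if every optimal element of a nonempty set S ⊆ Π (with respect to a cost function cost : Π → ℝ) satisfies C₁ or C₂. If N, N₁, N₂ ⊆ Π with N₁ = {π ∈ N | C₁ π} and N₂ = {π ∈ N | C₂ π}, and (C₁, C₂) is sound for N (every cost-minimal element of N satisfies C₁ or C₂), then the set of cost-minimal elements of N equals the set of cost-minimal elements of N₁ ∪ N₂ intersected with the minimizers of N; in particular, if N has a cost-minimal element, then N₁ ∪ N₂ contains a cost-minimal element of N, and inf over N₁ ∪ N₂ of cost equals inf over N of cost when the infimum of N is attained. -/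
/-!
A sound pair of constraints keeps every minimizer of `N` inside `N₁ ∪ N₂ ⊆ N`. A minimizer over
`N` that lies in the subset `N₁ ∪ N₂` also minimizes over it, so the minimizers of `N` are among
those of `N₁ ∪ N₂`, and both cost images have the same least element.
-/

namespace IsMinOn

variable {α β : Type*} {s t : Set α} {a : α}

theorem isLeast_image [Preorder β] {f : α → β} (hmin : IsMinOn f s a) (ha : a ∈ s) :
    IsLeast (f '' s) (f a) :=
  ⟨Set.mem_image_of_mem f ha, Set.forall_mem_image.2 (isMinOn_iff.1 hmin)⟩

theorem csInf_image_eq_of_subset [ConditionallyCompleteLattice β] {f : α → β}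
    (hmin : IsMinOn f s a) (hts : t ⊆ s) (ha : a ∈ t) : sInf (f '' t) = sInf (f '' s) := by
  rw [((hmin.on_subset hts).isLeast_image ha).csInf_eq, (hmin.isLeast_image (hts ha)).csInf_eq]

end IsMinOn

theorem Set.setOf_isMinOn_subset_of_subset {α β : Type*} [Preorder β] {f : α → β}
    {s t : Set α} (hts : t ⊆ s) (hmem : ∀ a ∈ s, IsMinOn f s a → a ∈ t) :
    {a ∈ s | IsMinOn f s a} ⊆ {a ∈ t | IsMinOn f t a} :=
  fun a ⟨ha, hmin⟩ => ⟨hmem a ha hmin, hmin.on_subset hts⟩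

/-- Splitting a CT node `N` by a sound pair of constraints `(C₁, C₂)` into children
`N₁, N₂` loses no optimal joint plan: the cost-minimizers of `N` equal the
cost-minimizers of `N₁ ∪ N₂` intersected with the minimizers of `N`; in particular if
`N` has a cost-minimal element then `N₁ ∪ N₂` contains a cost-minimal element of `N`
and the (attained) infima of the cost agree. -/
theorem ccbs_split_preserves_optimal {α : Type*} (cost : α → ℝ)
    (C₁ C₂ : α → Prop) (N N₁ N₂ : Set α)
    (hN₁ : N₁ = {π ∈ N | C₁ π}) (hN₂ : N₂ = {π ∈ N | C₂ π})
    (hsound : ∀ π ∈ N, (∀ π' ∈ N, cost π ≤ cost π') → C₁ π ∨ C₂ π) :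
    ({π ∈ N | ∀ π' ∈ N, cost π ≤ cost π'} =
      {π ∈ N₁ ∪ N₂ | ∀ π' ∈ N₁ ∪ N₂, cost π ≤ cost π'} ∩
        {π ∈ N | ∀ π' ∈ N, cost π ≤ cost π'}) ∧
    ((∃ π ∈ N, ∀ π' ∈ N, cost π ≤ cost π') →
      (∃ π ∈ N₁ ∪ N₂, π ∈ N ∧ ∀ π' ∈ N, cost π ≤ cost π') ∧
        sInf (cost '' (N₁ ∪ N₂)) = sInf (cost '' N)) := by
  have hsplit : N₁ ∪ N₂ = {π ∈ N | C₁ π ∨ C₂ π} := by rw [hN₁, hN₂, Set.sep_or]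
  have hsub : N₁ ∪ N₂ ⊆ N := hsplit ▸ Set.sep_subset N _
  have hmem : ∀ π ∈ N, IsMinOn cost N π → π ∈ N₁ ∪ N₂ := fun π hπ hmin =>
    hsplit ▸ ⟨hπ, hsound π hπ (isMinOn_iff.1 hmin)⟩
  refine ⟨(Set.inter_eq_right.2 (Set.setOf_isMinOn_subset_of_subset hsub hmem)).symm, ?_⟩
  rintro ⟨π, hπ, hmin⟩
  have hπU : π ∈ N₁ ∪ N₂ := hmem π hπ (isMinOn_iff.2 hmin)
  exact ⟨⟨π, hπU, hπ, hmin⟩, (isMinOn_iff.2 hmin).csInf_image_eq_of_subset hsub hπU⟩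
end

section
/- Two disk-shaped agents of common radius r moving with constant velocities v₁, v₂ ∈ ℝ² from initial positions p₁, p₂ ∈ ℝ² collide at some time t ≥ 0 (i.e., ∃ t ≥ 0, ‖(p₁ + t • v₁) - (p₂ + t • v₂)‖ < 2r) if and only if, writing d = p₁ - p₂ and w = v₁ - v₂, either ‖d‖ < 2r, or (⟪d, w⟫ < 0 and ⟪d, w⟫² > ‖w‖² * (‖d‖² - 4r²)). -/
open RealInnerProductSpace

lemma quad_key (a b c e : ℝ) (hc : 0 ≤ c) :
    (∃ t : ℝ, 0 ≤ t ∧ c * t ^ 2 + 2 * b * t + a < e) ↔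
      (a < e ∨ (b < 0 ∧ b ^ 2 > c * (a - e))) := by
  constructor
  · rintro ⟨t, ht, hlt⟩
    by_cases ha : a < e
    · exact Or.inl ha
    push_neg at ha
    have hb : b < 0 := by
      by_contra hb
      push_neg at hb
      nlinarith [mul_nonneg hc (sq_nonneg t), mul_nonneg hb ht]
    refine Or.inr ⟨hb, ?_⟩
    nlinarith [sq_nonneg (c * t + b), mul_nonneg hc (sub_pos.mpr hlt).le,
      mul_pos_of_neg_of_neg hb hb]
  · rintro (ha | ⟨hb, hdisc⟩)
    · exact ⟨0, le_refl 0, by nlinarith⟩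
    by_cases ha : a < e
    · exact ⟨0, le_refl 0, by nlinarith⟩
    push_neg at ha
    rcases eq_or_lt_of_le hc with hc0 | hc0
    · -- c = 0
      refine ⟨(e - a) / (2 * b) + 1, ?_, ?_⟩
      · have h1 : (0:ℝ) ≤ (e - a) / (2 * b) := by
          rw [div_nonneg_iff]; right; constructor <;> linarith
        linarith
      · have h2b : (2 : ℝ) * b ≠ 0 := by linarith
        have : 2 * b * ((e - a) / (2 * b) + 1) = (e - a) + 2 * b := by
          field_simp [ne_of_lt hb]
        nlinarith [this]
    · -- c > 0
      refine ⟨-b / c, div_nonneg (by linarith) hc, ?_⟩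
      · have hcne : c ≠ 0 := ne_of_gt hc0
        have h1 : c * (-b / c) ^ 2 + 2 * b * (-b / c) + a = a - b ^ 2 / c := by
          field_simp; ring
        rw [h1, sub_lt_iff_lt_add, ← sub_lt_iff_lt_add', lt_div_iff₀ hc0]
        nlinarith

/-- Closed-form collision detection for two constant-velocity disk agents of radius `r`
in the plane: a collision occurs at some time `t ≥ 0` iff the agents already overlap,
or they are approaching and the discriminant condition holds. -/
theorem disk_collision_closed_form
    (p₁ p₂ v₁ v₂ : EuclideanSpace ℝ (Fin 2)) (r : ℝ) (hr : 0 < r) :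
    (∃ t : ℝ, 0 ≤ t ∧ ‖(p₁ + t • v₁) - (p₂ + t • v₂)‖ < 2 * r) ↔
      (‖p₁ - p₂‖ < 2 * r ∨
        (⟪p₁ - p₂, v₁ - v₂⟫ < 0 ∧
          ⟪p₁ - p₂, v₁ - v₂⟫ ^ 2 > ‖v₁ - v₂‖ ^ 2 * (‖p₁ - p₂‖ ^ 2 - 4 * r ^ 2))) := by
  set d := p₁ - p₂ with hd
  set w := v₁ - v₂ with hw
  have h2r : (0:ℝ) < 2 * r := by linarith
  have hsq : ∀ x : EuclideanSpace ℝ (Fin 2), (‖x‖ < 2 * r ↔ ‖x‖ ^ 2 < (2 * r) ^ 2) := by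
    intro x
    constructor
    · intro h; exact pow_lt_pow_left₀ h (norm_nonneg x) (by norm_num)
    · intro h
      nlinarith [norm_nonneg x]
  have hexp : ∀ t : ℝ, ‖(p₁ + t • v₁) - (p₂ + t • v₂)‖ ^ 2
      = ‖w‖ ^ 2 * t ^ 2 + 2 * ⟪d, w⟫ * t + ‖d‖ ^ 2 := by
    intro t
    have hvec : (p₁ + t • v₁) - (p₂ + t • v₂) = d + t • w := by
      rw [hd, hw]; module
    rw [hvec, norm_add_sq_real, real_inner_smul_right, norm_smul]
    simp [mul_pow, abs_sq]
    ring
  have key := quad_key (‖d‖ ^ 2) (⟪d, w⟫) (‖w‖ ^ 2) ((2 * r) ^ 2) (sq_nonneg _)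
  constructor
  · rintro ⟨t, ht, hlt⟩
    have := key.mp ⟨t, ht, by rw [← hexp t]; exact (hsq _).mp hlt⟩
    rcases this with h | ⟨h1, h2⟩
    · left; nlinarith [norm_nonneg d]
    · right; refine ⟨h1, ?_⟩; nlinarith
  · intro h
    have : ‖d‖ ^ 2 < (2 * r) ^ 2 ∨ (⟪d, w⟫ < 0 ∧ ⟪d, w⟫ ^ 2 > ‖w‖ ^ 2 * (‖d‖ ^ 2 - (2 * r) ^ 2)) := by
      rcases h with h | ⟨h1, h2⟩
      · left; nlinarith [norm_nonneg d]
      · right; exact ⟨h1, by nlinarith⟩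
    obtain ⟨t, ht, hlt⟩ := key.mpr this
    exact ⟨t, ht, (hsq _).mpr (by rw [hexp t]; exact hlt)⟩
end

section
/- Let a best-first search expand nodes of a (possibly infinite) tree in nondecreasing order of a node value f, where f is monotonically nondecreasing along tree edges (f(child) ≥ f(parent)), every node has finitely many children, and goal nodes exist with finite value. If there exists a goal node g with f(g) = c* such that every node on the path from the root to g has value ≤ c*, and only finitely many nodes in the tree have value ≤ c* (for every real bound, finitely many nodes have value below it), then best-first search terminates and the first goal node it expands has value c* equal to the minimum value over all goal nodes. -/
/-!
Every node expanded before the first goal has value at most `c*`: the root lies on the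
path to `g`, and `g` itself has not been expanded yet, so some node of that path sits on
the frontier, and best-first choice bounds the expanded value by its value `≤ c*`. As long
as no goal is expanded the run never repeats a node, so it would enumerate infinitely many
nodes of value `≤ c*`, of which there are only finitely many. Hence a goal is expanded,
and the first one has value `≤ c*`, which is the minimum over goals.
-/

theorem Function.exists_iterate_notMem_and_apply_mem {α : Type*} {p : α → α} {s : Set α}
    {x : α} (hx : x ∉ s) {k : ℕ} (hk : p^[k] x ∈ s) :
    ∃ j, p^[j] x ∉ s ∧ p (p^[j] x) ∈ s := by
  induction k generalizing x with
  | zero => exact absurd hk hx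
  | succ k ih =>
    by_cases hpx : p x ∈ s
    · exact ⟨0, hx, hpx⟩
    · obtain ⟨j, hj⟩ := ih hpx hk
      exact ⟨j + 1, hj⟩

section BestFirstSearch

variable {ν : Type*} {root : ν} {parent : ν → ν} {f : ν → ℝ} {goal : ν → Prop}
  {exp : ℕ → ν}

theorem apply_exp_le_of_path_le {cstar : ℝ} {g : ν} {k : ℕ} (hg : goal g)
    (hk : parent^[k] g = root) (hpath : ∀ n : ℕ, f (parent^[n] g) ≤ cstar)
    (hexp0 : exp 0 = root)
    (hbest : ∀ n : ℕ, 0 < n → (∀ m < n, ¬ goal (exp m)) →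
      ∀ y, parent y ∈ exp '' Set.Iio n → y ∉ exp '' Set.Iio n → f (exp n) ≤ f y)
    {n : ℕ} (hn : ∀ m < n, ¬ goal (exp m)) :
    f (exp n) ≤ cstar := by
  rcases Nat.eq_zero_or_pos n with rfl | hpos
  · rw [hexp0, ← hk]
    exact hpath k
  have hg_new : g ∉ exp '' Set.Iio n := by
    rintro ⟨m, hm, rfl⟩
    exact hn m hm hg
  have hroot_old : parent^[k] g ∈ exp '' Set.Iio n := ⟨0, hpos, hexp0.trans hk.symm⟩
  obtain ⟨j, hj_new, hj_parent⟩ :=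
    Function.exists_iterate_notMem_and_apply_mem hg_new hroot_old
  exact (hbest n hpos hn _ hj_parent hj_new).trans (hpath j)

theorem exists_goal_exp {c : ℝ} (hlevelfin : {x | f x ≤ c}.Finite)
    (hgen : ∀ n : ℕ, 0 < n → (∀ m < n, ¬ goal (exp m)) →
      parent (exp n) ∈ exp '' Set.Iio n ∧ exp n ∉ exp '' Set.Iio n)
    (hbound : ∀ n : ℕ, (∀ m < n, ¬ goal (exp m)) → f (exp n) ≤ c) :
    ∃ N, goal (exp N) := by
  by_contra! hnone
  have hinj : Function.Injective exp :=
    Function.Injective.of_lt_imp_ne fun a b hab heq =>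
      (hgen b (by omega) fun m _ => hnone m).2 ⟨a, hab, heq⟩
  exact Set.infinite_of_injective_forall_mem hinj (fun n => hbound n fun m _ => hnone m)
    hlevelfin

end BestFirstSearch

theorem best_first_search_optimal_general {ν : Type*}
    (root : ν) (parent : ν → ν) (f : ν → ℝ) (goal : ν → Prop)
    (cstar : ℝ) (g : ν) (exp : ℕ → ν)
    (hlevelfin : ∀ c : ℝ, {x | f x ≤ c}.Finite)
    (hg : goal g)
    (hreach : ∃ n : ℕ, parent^[n] g = root)
    (hpath : ∀ n : ℕ, f (parent^[n] g) ≤ cstar)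
    (hcmin : ∀ h, goal h → cstar ≤ f h)
    (hexp0 : exp 0 = root)
    (hgen : ∀ n : ℕ, 0 < n → (∀ m < n, ¬ goal (exp m)) →
      parent (exp n) ∈ exp '' Set.Iio n ∧ exp n ∉ exp '' Set.Iio n)
    (hbest : ∀ n : ℕ, 0 < n → (∀ m < n, ¬ goal (exp m)) →
      ∀ y, parent y ∈ exp '' Set.Iio n → y ∉ exp '' Set.Iio n → f (exp n) ≤ f y) :
    ∃ N : ℕ, goal (exp N) ∧ (∀ m < N, ¬ goal (exp m)) ∧
      f (exp N) = cstar ∧ ∀ h, goal h → f (exp N) ≤ f h := by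
  classical
  obtain ⟨k, hk⟩ := hreach
  have hbound : ∀ n : ℕ, (∀ m < n, ¬ goal (exp m)) → f (exp n) ≤ cstar :=
    fun n hn => apply_exp_le_of_path_le hg hk hpath hexp0 hbest hn
  have hexists : ∃ N, goal (exp N) := exists_goal_exp (hlevelfin cstar) hgen hbound
  have hfirst : ∀ m < Nat.find hexists, ¬ goal (exp m) := fun m hm => Nat.find_min hexists hm
  have hle : f (exp (Nat.find hexists)) ≤ cstar := hbound _ hfirst
  exact ⟨Nat.find hexists, Nat.find_spec hexists, hfirst,
    le_antisymm hle (hcmin _ (Nat.find_spec hexists)), fun h hh => hle.trans (hcmin h hh)⟩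

/-- Abstract optimality/termination of best-first search on a (possibly infinite)
tree given by `parent`, rooted at `root` (with `parent root = root`): `f` is
nondecreasing along tree edges, every node has finitely many children, and for every
bound only finitely many nodes have value below it.  The run `exp` enumerates the
expanded nodes: it starts at the root and, until the first goal is expanded, always
expands a not-yet-expanded node whose parent was already expanded and whose `f`-value
is minimal on the frontier.  If there is a goal node `g` reachable from the root with
`f g = c*`, whose ancestors all have value `≤ c*`, and `c*` is minimal among goal
values, then the search expands a goal node after finitely many steps, it is the first
goal expanded, and its value is `c*`, the minimum value over all goal nodes. -/
theorem best_first_search_optimal {ν : Type*}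
    (root : ν) (parent : ν → ν) (f : ν → ℝ) (goal : ν → Prop)
    (cstar : ℝ) (g : ν) (exp : ℕ → ν)
    (hparent_root : parent root = root)
    (hmono : ∀ x, f (parent x) ≤ f x)
    (hchildfin : ∀ x, {y | parent y = x}.Finite)
    (hlevelfin : ∀ c : ℝ, {x | f x ≤ c}.Finite)
    (hg : goal g) (hgval : f g = cstar)
    (hreach : ∃ n : ℕ, parent^[n] g = root)
    (hpath : ∀ n : ℕ, f (parent^[n] g) ≤ cstar)
    (hcmin : ∀ h, goal h → cstar ≤ f h)
    (hexp0 : exp 0 = root)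
    (hgen : ∀ n : ℕ, 0 < n → (∀ m < n, ¬ goal (exp m)) →
      parent (exp n) ∈ exp '' Set.Iio n ∧ exp n ∉ exp '' Set.Iio n)
    (hbest : ∀ n : ℕ, 0 < n → (∀ m < n, ¬ goal (exp m)) →
      ∀ y, parent y ∈ exp '' Set.Iio n → y ∉ exp '' Set.Iio n → f (exp n) ≤ f y) :
    ∃ N : ℕ, goal (exp N) ∧ (∀ m < N, ¬ goal (exp m)) ∧
      f (exp N) = cstar ∧ ∀ h, goal h → f (exp N) ≤ f h :=
  best_first_search_optimal_general root parent f goal cstar g exp hlevelfin hg hreach hpath hcmin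
    hexp0 hgen hbest
end
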